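/- Let q(z) = q₀z² + 2q₁z + q₂ be a real quadratic. For a real polynomial P of degree at most 4, set τ(q,P) = 6q''P − 3q'P' + qP'' (where q'' = 2q₀ is constant). Then τ(q,P) is a polynomial of degree at most 2; and if q is nonzero, the linear map P ↦ τ(q,P) from the space of real polynomials of degree at most 4 onto the space of real polynomials of degree at most 2 is surjective. -/

import Mathlib

/-!
The coefficients of `τ(q,P)` are linear in those of `P`. If `q₀ ≠ 0` the system is triangular in
`c₂, c₃, c₄`; the case `q₂ ≠ 0` is its mirror image under `z ↦ 1/z`; and if `q₀ = q₂ = 0` then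
`q = 2q₁z` with `q₁ ≠ 0`, and the system is diagonal in `c₁, c₂, c₃`.
-/

/-- The second transvectant `τ(q,P) = 6q''P − 3q'P' + qP''` of the quadratic
`q(z) = q₀z² + 2q₁z + q₂` (so `q'' = 2q₀`) with the quartic
`P(z) = c₀z⁴ + c₁z³ + c₂z² + c₃z + c₄`. -/
noncomputable def transvectant2 (q0 q1 q2 c0 c1 c2 c3 c4 z : ℝ) : ℝ :=
  6 * (2 * q0) * (c0 * z ^ 4 + c1 * z ^ 3 + c2 * z ^ 2 + c3 * z + c4)
    - 3 * (2 * q0 * z + 2 * q1) * (4 * c0 * z ^ 3 + 3 * c1 * z ^ 2 + 2 * c2 * z + c3)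
    + (q0 * z ^ 2 + 2 * q1 * z + q2) * (12 * c0 * z ^ 2 + 6 * c1 * z + 2 * c2)

def transvectant2Coeffs (q0 q1 q2 c0 c1 c2 c3 c4 : ℝ) : ℝ × ℝ × ℝ :=
  (12 * q2 * c0 - 6 * q1 * c1 + 2 * q0 * c2,
    6 * q2 * c1 - 8 * q1 * c2 + 6 * q0 * c3,
    2 * q2 * c2 - 6 * q1 * c3 + 12 * q0 * c4)

lemma transvectant2_eq (q0 q1 q2 c0 c1 c2 c3 c4 z : ℝ) :
    transvectant2 q0 q1 q2 c0 c1 c2 c3 c4 z =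
      (transvectant2Coeffs q0 q1 q2 c0 c1 c2 c3 c4).1 * z ^ 2
        + (transvectant2Coeffs q0 q1 q2 c0 c1 c2 c3 c4).2.1 * z
        + (transvectant2Coeffs q0 q1 q2 c0 c1 c2 c3 c4).2.2 := by
  simp only [transvectant2, transvectant2Coeffs]
  ring

lemma transvectant2Coeffs_reverse (q0 q1 q2 c0 c1 c2 c3 c4 : ℝ) :
    transvectant2Coeffs q0 q1 q2 c0 c1 c2 c3 c4 =
      let x := transvectant2Coeffs q2 q1 q0 c4 c3 c2 c1 c0
      (x.2.2, x.2.1, x.1) := by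
  simp only [transvectant2Coeffs, Prod.mk.injEq]
  refine ⟨?_, ?_, ?_⟩ <;> ring

lemma exists_transvectant2Coeffs_eq_of_ne_zero {q0 : ℝ} (q1 q2 : ℝ) (hq0 : q0 ≠ 0)
    (e0 e1 e2 : ℝ) :
    ∃ c0 c1 c2 c3 c4, transvectant2Coeffs q0 q1 q2 c0 c1 c2 c3 c4 = (e0, e1, e2) := by
  have solve (a b : ℝ) (ha : a ≠ 0) : ∃ c, a * c = b := ⟨b / a, mul_div_cancel₀ b ha⟩
  obtain ⟨c2, hc2⟩ := solve (2 * q0) e0 (by positivity)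
  obtain ⟨c3, hc3⟩ := solve (6 * q0) (e1 + 8 * q1 * c2) (by positivity)
  obtain ⟨c4, hc4⟩ := solve (12 * q0) (e2 - 2 * q2 * c2 + 6 * q1 * c3) (by positivity)
  refine ⟨0, 0, c2, c3, c4, ?_⟩
  simp only [transvectant2Coeffs, Prod.mk.injEq]
  exact ⟨by linarith, by linarith, by linarith⟩

lemma exists_transvectant2Coeffs_eq_of_middle_ne_zero {q1 : ℝ} (hq1 : q1 ≠ 0)
    (e0 e1 e2 : ℝ) :
    ∃ c0 c1 c2 c3 c4, transvectant2Coeffs 0 q1 0 c0 c1 c2 c3 c4 = (e0, e1, e2) := by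
  refine ⟨0, -e0 / (6 * q1), -e1 / (8 * q1), -e2 / (6 * q1), 0, ?_⟩
  simp only [transvectant2Coeffs, Prod.mk.injEq]
  refine ⟨?_, ?_, ?_⟩ <;> field_simp <;> ring

lemma exists_transvectant2Coeffs_eq {q0 q1 q2 : ℝ} (hq : ¬(q0 = 0 ∧ q1 = 0 ∧ q2 = 0))
    (e0 e1 e2 : ℝ) :
    ∃ c0 c1 c2 c3 c4, transvectant2Coeffs q0 q1 q2 c0 c1 c2 c3 c4 = (e0, e1, e2) := by
  by_cases hq0 : q0 = 0
  · by_cases hq2 : q2 = 0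
    · subst hq0 hq2
      exact exists_transvectant2Coeffs_eq_of_middle_ne_zero (fun hq1 => hq ⟨rfl, hq1, rfl⟩) _ _ _
    · obtain ⟨c0, c1, c2, c3, c4, hc⟩ :=
        exists_transvectant2Coeffs_eq_of_ne_zero q1 q0 hq2 e2 e1 e0
      exact ⟨c4, c3, c2, c1, c0, by rw [transvectant2Coeffs_reverse, hc]⟩
  · exact exists_transvectant2Coeffs_eq_of_ne_zero q1 q2 hq0 e0 e1 e2

/-- `τ(q,P)` is a polynomial of degree at most 2, and when `q ≠ 0` the map
`P ↦ τ(q,P)` from quartics onto quadratics is surjective. -/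
theorem transvectant2_quadratic_surjective (q0 q1 q2 : ℝ) :
    (∀ c0 c1 c2 c3 c4 : ℝ, ∃ e0 e1 e2 : ℝ, ∀ z : ℝ,
        transvectant2 q0 q1 q2 c0 c1 c2 c3 c4 z = e0 * z ^ 2 + e1 * z + e2)
    ∧ (¬(q0 = 0 ∧ q1 = 0 ∧ q2 = 0) →
      ∀ e0 e1 e2 : ℝ, ∃ c0 c1 c2 c3 c4 : ℝ, ∀ z : ℝ,
        transvectant2 q0 q1 q2 c0 c1 c2 c3 c4 z = e0 * z ^ 2 + e1 * z + e2) := by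
  refine ⟨fun c0 c1 c2 c3 c4 => ⟨_, _, _, transvectant2_eq q0 q1 q2 c0 c1 c2 c3 c4⟩,
    fun hq e0 e1 e2 => ?_⟩
  obtain ⟨c0, c1, c2, c3, c4, hc⟩ := exists_transvectant2Coeffs_eq hq e0 e1 e2
  exact ⟨c0, c1, c2, c3, c4, fun z => by rw [transvectant2_eq, hc]⟩
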